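/- arXiv:1306.3454 — 2 statements merged into one kernel-verified Lean document; each statement's English description precedes it below -/
import Mathlib

section
/- Let γ ∈ (0,1) and ε ∈ (0,1). There exist constants 0 < c ≤ C and k_0 ∈ ℕ such that for all k ≥ k_0: c · (1−ε^γ)^k / k ≤ ∫_ε^1 (1 − y^γ)^k dy ≤ C · (1−ε^γ)^k / k. -/
/-!
Put `a = 1 - ε ^ γ`, the value of the integrand's base at `y = ε`. The function `y ↦ 1 - y ^ γ`
is convex, so on `[ε, 1]` it lies below its chord `a (1 - y) / (1 - ε)`, whose `k`-th power
integrates to `(1 - ε) a ^ k / (k + 1)`. It also lies above its tangent at `ε`, so on the interval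
`[ε, ε + δ / k]`, for a suitable `δ > 0`, it is at least `a (1 - 1 / (2k))`, and by Bernoulli's
inequality the integrand there is at least `a ^ k / 2`; this gives the lower bound `δ a ^ k / (2k)`.
-/

open Real intervalIntegral

lemma rpow_sub_rpow_le_rpow_sub_one_mul {x y γ : ℝ} (hx : 0 < x) (hxy : x ≤ y) (hγ : γ ≤ 1) :
    y ^ γ - x ^ γ ≤ x ^ (γ - 1) * (y - x) := by
  have hyx : 1 ≤ y / x := (one_le_div hx).2 hxy
  have hy : y ^ γ ≤ x ^ γ * (y / x) :=
    calc y ^ γ = x ^ γ * (y / x) ^ γ := by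
          rw [div_rpow (hx.le.trans hxy) hx.le, mul_div_cancel₀ _ (rpow_pos_of_pos hx γ).ne']
      _ ≤ x ^ γ * (y / x) := by
          gcongr
          simpa using rpow_le_rpow_of_exponent_le hyx hγ
  rw [rpow_sub_one hx.ne']
  field_simp at hy ⊢
  linarith

lemma one_sub_mul_one_sub_rpow_le {γ ε y : ℝ} (hγ0 : 0 ≤ γ) (hγ1 : γ ≤ 1) (hε : 0 ≤ ε)
    (hεy : ε < y) (hy : y < 1) : (1 - ε) * (1 - y ^ γ) ≤ (1 - y) * (1 - ε ^ γ) := by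
  have := (concaveOn_rpow hγ0 hγ1).neg.secant_mono_aux1 hε (Set.mem_Ici.2 zero_le_one) hεy hy
  simp only [Pi.neg_apply, one_rpow] at this
  linarith

lemma pow_div_two_le_pow_of_sub_div_le {a b : ℝ} {k : ℕ} (ha : 0 ≤ a)
    (hab : a - a / (2 * k) ≤ b) : a ^ k / 2 ≤ b ^ k := by
  rcases k.eq_zero_or_pos with rfl | hk
  · norm_num
  have hk : (1 : ℝ) ≤ k := by exact_mod_cast hk
  have hfactor : 0 ≤ 1 - 1 / (2 * (k : ℝ)) := by
    rw [sub_nonneg, div_le_one (by positivity)]; linarith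
  have hbernoulli : (1 : ℝ) / 2 ≤ (1 - 1 / (2 * k)) ^ k := by
    have := one_add_mul_le_pow (a := -(1 / (2 * (k : ℝ)))) (by
      rw [neg_le_neg_iff, div_le_iff₀ (by positivity)]; linarith) k
    rw [← sub_eq_add_neg] at this
    field_simp at this ⊢
    linarith
  calc a ^ k / 2 ≤ a ^ k * (1 - 1 / (2 * k)) ^ k := by
        rw [div_eq_mul_one_div]
        gcongr
    _ = (a * (1 - 1 / (2 * k))) ^ k := (mul_pow _ _ _).symm
    _ ≤ b ^ k := by
        refine pow_le_pow_left₀ (mul_nonneg ha hfactor) ?_ k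
        rwa [mul_one_sub, mul_one_div]

lemma integral_one_sub_pow (x : ℝ) (k : ℕ) :
    ∫ y in x..1, (1 - y) ^ k = (1 - x) ^ (k + 1) / (k + 1) := by
  simp [integral_comp_sub_left (fun t => t ^ k) 1, integral_pow]

lemma continuous_one_sub_rpow_pow {γ : ℝ} (hγ : 0 ≤ γ) (k : ℕ) :
    Continuous fun y : ℝ => (1 - y ^ γ) ^ k :=
  (continuous_const.sub (continuous_rpow_const hγ)).pow k

lemma integral_one_sub_rpow_pow_le {γ ε : ℝ} (hγ0 : 0 ≤ γ) (hγ1 : γ ≤ 1) (hε0 : 0 ≤ ε)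
    (hε1 : ε < 1) (k : ℕ) :
    ∫ y in ε..1, (1 - y ^ γ) ^ k ≤ (1 - ε) * (1 - ε ^ γ) ^ k / (k + 1) := by
  set a := 1 - ε ^ γ
  have hε1' : 0 < 1 - ε := sub_pos.2 hε1
  have hchord : ∀ y ∈ Set.Ioo ε 1, (1 - y ^ γ) ^ k ≤ (a / (1 - ε)) ^ k * (1 - y) ^ k := by
    rintro y ⟨hεy, hy1⟩
    rw [← mul_pow]
    refine pow_le_pow_left₀ (sub_nonneg.2 (rpow_le_one (hε0.trans hεy.le) hy1.le hγ0)) ?_ k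
    rw [div_mul_eq_mul_div, le_div_iff₀ hε1']
    linarith [one_sub_mul_one_sub_rpow_le hγ0 hγ1 hε0 hεy hy1]
  calc ∫ y in ε..1, (1 - y ^ γ) ^ k ≤ ∫ y in ε..1, (a / (1 - ε)) ^ k * (1 - y) ^ k :=
        integral_mono_on_of_le_Ioo hε1.le
          ((continuous_one_sub_rpow_pow hγ0 k).intervalIntegrable _ _)
          ((continuous_const.mul ((continuous_const.sub continuous_id).pow k)).intervalIntegrable
            _ _) hchord
    _ = (1 - ε) * a ^ k / (k + 1) := by
        rw [integral_const_mul, integral_one_sub_pow, div_pow, pow_succ]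
        field_simp

lemma exists_mul_pow_div_le_integral_one_sub_rpow_pow {γ ε : ℝ} (hγ0 : 0 < γ) (hγ1 : γ ≤ 1)
    (hε0 : 0 < ε) (hε1 : ε < 1) :
    ∃ c, 0 < c ∧ c ≤ 1 - ε ∧
      ∀ k : ℕ, 1 ≤ k → c * (1 - ε ^ γ) ^ k / k ≤ ∫ y in ε..1, (1 - y ^ γ) ^ k := by
  set a := 1 - ε ^ γ
  set M := ε ^ (γ - 1)
  have ha : 0 < a := sub_pos.2 (rpow_lt_one hε0.le hε1 hγ0)
  have hM : 0 < M := rpow_pos_of_pos hε0 _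
  set δ := min (a / (2 * M)) (1 - ε)
  have hδ : 0 < δ := lt_min (by positivity) (sub_pos.2 hε1)
  have hδε : δ ≤ 1 - ε := min_le_right _ _
  refine ⟨δ / 2, by positivity, by linarith, fun k hk => ?_⟩
  have hk : (1 : ℝ) ≤ k := by exact_mod_cast hk
  have hδk : 0 < δ / k ∧ δ / k ≤ δ := ⟨by positivity, div_le_self hδ.le hk⟩
  have hMδ : 2 * M * δ ≤ a := by
    have := min_le_left (a / (2 * M)) (1 - ε)
    rwa [le_div_iff₀ (by positivity), mul_comm] at this
  have hbound : ∀ y ∈ Set.Icc ε (ε + δ / k), a ^ k / 2 ≤ (1 - y ^ γ) ^ k := by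
    rintro y ⟨hεy, hyδ⟩
    have htangent : y ^ γ - ε ^ γ ≤ M * (y - ε) := rpow_sub_rpow_le_rpow_sub_one_mul hε0 hεy hγ1
    have hMy : M * (y - ε) ≤ a / (2 * k) :=
      calc M * (y - ε) ≤ M * (δ / k) := by gcongr; linarith
        _ ≤ a / (2 * k) := by
          rw [mul_div_assoc', div_le_div_iff₀ (by positivity) (by positivity)]
          nlinarith
    exact pow_div_two_le_pow_of_sub_div_le ha.le (by linarith)
  calc δ / 2 * a ^ k / k = ∫ _ in ε..ε + δ / k, a ^ k / 2 := by
        rw [integral_const, smul_eq_mul]; field_simp; ring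
    _ ≤ ∫ y in ε..ε + δ / k, (1 - y ^ γ) ^ k :=
        integral_mono_on (by linarith) intervalIntegrable_const ((continuous_one_sub_rpow_pow hγ0.le k).intervalIntegrable _ _)
          hbound
    _ ≤ ∫ y in ε..1, (1 - y ^ γ) ^ k := by
        refine integral_mono_interval le_rfl (by linarith) (by linarith) ?_
          ((continuous_one_sub_rpow_pow hγ0.le k).intervalIntegrable _ _)
        refine MeasureTheory.ae_restrict_of_forall_mem measurableSet_Ioc fun y hy => ?_
        exact pow_nonneg (sub_nonneg.2 (rpow_le_one (hε0.le.trans hy.1.le) hy.2 hγ0.le)) k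

/-- Laplace-method asymptotics: for `γ, ε ∈ (0,1)` there are constants
`0 < c ≤ C` and `k₀` with `c (1−ε^γ)^k / k ≤ ∫_ε^1 (1−y^γ)^k dy ≤ C (1−ε^γ)^k / k`
for all `k ≥ k₀`. -/
theorem integral_one_sub_rpow_pow_asymp (γ ε : ℝ) (hγ : γ ∈ Set.Ioo (0 : ℝ) 1)
    (hε : ε ∈ Set.Ioo (0 : ℝ) 1) :
    ∃ c C : ℝ, 0 < c ∧ c ≤ C ∧ ∃ k₀ : ℕ, ∀ k : ℕ, k₀ ≤ k →
      c * (1 - ε ^ γ) ^ k / k ≤ (∫ y in ε..1, (1 - y ^ γ) ^ k) ∧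
      (∫ y in ε..1, (1 - y ^ γ) ^ k) ≤ C * (1 - ε ^ γ) ^ k / k := by
  obtain ⟨hγ0, hγ1⟩ := hγ
  obtain ⟨hε0, hε1⟩ := hε
  obtain ⟨c, hc, hcC, hlower⟩ :=
    exists_mul_pow_div_le_integral_one_sub_rpow_pow hγ0 hγ1.le hε0 hε1
  refine ⟨c, 1 - ε, hc, hcC, 1, fun k hk => ⟨hlower k hk, ?_⟩⟩
  have hk : (0 : ℝ) < k := by exact_mod_cast hk
  have ha : 0 ≤ 1 - ε ^ γ := sub_nonneg.2 (rpow_le_one hε0.le hε1.le hγ0.le)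
  calc ∫ y in ε..1, (1 - y ^ γ) ^ k ≤ (1 - ε) * (1 - ε ^ γ) ^ k / (k + 1) :=
        integral_one_sub_rpow_pow_le hγ0.le hγ1.le hε0.le hε1 k
    _ ≤ (1 - ε) * (1 - ε ^ γ) ^ k / k := by
        have := pow_nonneg ha k
        gcongr
        linarith
end

section
/- Let γ ∈ (1/2, 1) and ε ∈ (0,1). Let T be a continuous linear operator on the real Hilbert space L²((ε,1)) (with Lebesgue measure) satisfying, for every g ∈ L²((ε,1)) and almost every x ∈ (ε,1), Tg(x) = ∫_ε^1 (min(x,y))^{−γ} (max(x,y))^{−(1−γ)} g(y) dy. Then the operator norm of T satisfies ‖T‖² ≥ (ε^{1−2γ}/(2γ−1)²) · (1 − ε^{2γ−1} + 2(2γ−1) ε^{2γ−1} log ε). -/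
/-!
Test `T` against `f(y) = y^{-γ}`. The kernel is positive, so `Tf(x)` is at least the
contribution `φ(x) = x^{γ-1} (ε^{1-2γ} - x^{1-2γ}) / (2γ-1) ≥ 0` of the range `y < x`, whence
`‖T‖² ‖f‖² ≥ ‖Tf‖² ≥ ∫ φ²`. Both `‖f‖²` and `∫ φ²` are explicit, and `∫ φ² / ‖f‖²` exceeds the
claimed bound by a multiple of `ε^{1-2γ} - 1 + (2γ-1) log ε`, which is nonnegative since
`e^t ≥ 1 + t`.
-/

open MeasureTheory Real Set

lemma Real.one_add_mul_log_le_rpow {x : ℝ} (hx : 0 < x) (r : ℝ) : 1 + r * log x ≤ x ^ r := by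
  rw [rpow_def_of_pos hx, mul_comm]
  linarith [add_one_le_exp (log x * r)]

lemma ContinuousLinearMap.le_opNorm_sq_of_mul_norm_sq_le {E F : Type*}
    [SeminormedAddCommGroup E] [NormedSpace ℝ E] [SeminormedAddCommGroup F] [NormedSpace ℝ F]
    (T : E →L[ℝ] F) {c : ℝ} {g : E} (hg : 0 < ‖g‖ ^ 2) (h : c * ‖g‖ ^ 2 ≤ ‖T g‖ ^ 2) :
    c ≤ ‖T‖ ^ 2 := by
  have : ‖T g‖ ^ 2 ≤ ‖T‖ ^ 2 * ‖g‖ ^ 2 := by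
    rw [← mul_pow]; exact pow_le_pow_left₀ (norm_nonneg _) (T.le_opNorm g) 2
  exact le_of_mul_le_mul_right (h.trans this) hg

namespace MeasureTheory

variable {α : Type*} [MeasurableSpace α] {μ : Measure α}

lemma Lp.norm_sq_eq_integral_sq (f : Lp ℝ 2 μ) : ‖f‖ ^ 2 = ∫ x, f x ^ 2 ∂μ := by
  rw [← real_inner_self_eq_norm_sq, L2.inner_def]
  simp only [RCLike.inner_apply, RCLike.conj_to_real, sq]

lemma MemLp.norm_toLp_sq {f : α → ℝ} (hf : MemLp f 2 μ) : ‖hf.toLp f‖ ^ 2 = ∫ x, f x ^ 2 ∂μ := by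
  rw [Lp.norm_sq_eq_integral_sq]
  exact integral_congr_ae (hf.coeFn_toLp.mono fun x hx => by simp only [hx])

lemma integral_sq_le_norm_sq_of_ae_le {φ : α → ℝ} (f : Lp ℝ 2 μ)
    (hφ : Integrable (fun x => φ x ^ 2) μ) (h0 : ∀ᵐ x ∂μ, 0 ≤ φ x) (hle : ∀ᵐ x ∂μ, φ x ≤ f x) :
    ∫ x, φ x ^ 2 ∂μ ≤ ‖f‖ ^ 2 := by
  rw [Lp.norm_sq_eq_integral_sq]
  refine integral_mono_ae hφ (Lp.memLp f).integrable_sq ?_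
  filter_upwards [h0, hle] with x hx0 hx using pow_le_pow_left₀ hx0 hx 2

end MeasureTheory

lemma integral_Ioo_rpow {a b r : ℝ} (ha : 0 < a) (hab : a ≤ b) (hr : r ≠ -1) :
    ∫ x in Ioo a b, x ^ r = (b ^ (r + 1) - a ^ (r + 1)) / (r + 1) := by
  rw [← integral_Ioc_eq_integral_Ioo, ← intervalIntegral.integral_of_le hab]
  exact integral_rpow (Or.inr ⟨hr, notMem_uIcc_of_lt ha (ha.trans_le hab)⟩)

lemma integral_Ioo_inv {a b : ℝ} (ha : 0 < a) (hab : a ≤ b) :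
    ∫ x in Ioo a b, x⁻¹ = log b - log a := by
  rw [← integral_Ioc_eq_integral_Ioo, ← intervalIntegral.integral_of_le hab,
    integral_inv (notMem_uIcc_of_lt ha (ha.trans_le hab)),
    log_div (ha.trans_le hab).ne' ha.ne']

lemma integrableOn_Ioo_rpow {a : ℝ} (ha : 0 < a) (b r : ℝ) :
    IntegrableOn (fun x : ℝ => x ^ r) (Ioo a b) := by
  refine (ContinuousOn.integrableOn_Icc ?_).mono_set Ioo_subset_Icc_self
  exact continuousOn_id.rpow_const fun x hx => Or.inl (ha.trans_le hx.1).ne'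

lemma memLp_two_Ioo_rpow {a : ℝ} (ha : 0 < a) (b r : ℝ) :
    MemLp (fun x : ℝ => x ^ r) 2 (volume.restrict (Ioo a b)) := by
  refine (memLp_two_iff_integrable_sq (by fun_prop)).mpr ?_
  refine (integrableOn_Ioo_rpow ha b (2 * r)).congr_fun (fun x hx => ?_) measurableSet_Ioo
  dsimp only
  rw [mul_comm, rpow_mul (ha.trans hx.1).le, rpow_two]

noncomputable def paKernel (γ x y : ℝ) : ℝ := min x y ^ (-γ) * max x y ^ (-(1 - γ))

/-- `∫_ε^x κ(x,y) y^{-γ} dy`: the part of the image of `y ↦ y^{-γ}` coming from `y < x`. -/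
noncomputable def paPartialImage (γ ε x : ℝ) : ℝ :=
  (ε ^ (1 - 2 * γ) * x ^ (γ - 1) - x ^ (-γ)) / (2 * γ - 1)

variable {γ ε x : ℝ}

lemma setIntegral_rpow_neg_sq (hε : 0 < ε) (hε1 : ε ≤ 1) (hγ : 2 * γ ≠ 1) :
    ∫ x in Ioo ε 1, (x ^ (-γ)) ^ 2 = (ε ^ (1 - 2 * γ) - 1) / (2 * γ - 1) := by
  rw [setIntegral_congr_fun measurableSet_Ioo fun x hx => by
      rw [← rpow_two, ← rpow_mul (hε.trans hx.1).le, neg_mul, mul_comm],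
    integral_Ioo_rpow hε hε1 (by contrapose! hγ; linarith), one_rpow,
    show -(2 * γ) + 1 = -(2 * γ - 1) by ring, div_neg, ← neg_div, neg_sub, neg_sub]

lemma paKernel_nonneg {y : ℝ} (hx : 0 ≤ x) (hy : 0 ≤ y) : 0 ≤ paKernel γ x y :=
  mul_nonneg (rpow_nonneg (le_min hx hy) _) (rpow_nonneg (hx.trans (le_max_left x y)) _)

lemma paKernel_mul_rpow_of_le {y : ℝ} (hy : 0 < y) (hyx : y ≤ x) :
    paKernel γ x y * y ^ (-γ) = x ^ (γ - 1) * y ^ (-(2 * γ)) := by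
  rw [paKernel, min_eq_right hyx, max_eq_left hyx, neg_sub, mul_right_comm, ← rpow_add hy,
    mul_comm]
  ring_nf

lemma setIntegral_paKernel_mul_rpow_Ioo_left (hε : 0 < ε) (hεx : ε ≤ x) (hγ : 2 * γ ≠ 1) :
    ∫ y in Ioo ε x, paKernel γ x y * y ^ (-γ) = paPartialImage γ ε x := by
  have hx : 0 < x := hε.trans_le hεx
  rw [setIntegral_congr_fun measurableSet_Ioo
      fun y hy => paKernel_mul_rpow_of_le (hε.trans hy.1) hy.2.le,
    integral_const_mul, integral_Ioo_rpow hε hεx (by contrapose! hγ; linarith),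
    paPartialImage, show x ^ (-γ) = x ^ (γ - 1) * x ^ (-(2 * γ) + 1) by
      rw [← rpow_add hx]; ring_nf,
    show -(2 * γ) + 1 = 1 - 2 * γ by ring, ← neg_sub (2 * γ) 1, div_neg]
  ring

lemma paPartialImage_nonneg (hε : 0 < ε) (hεx : ε ≤ x) (hγ : 2 * γ ≠ 1) :
    0 ≤ paPartialImage γ ε x := by
  rw [← setIntegral_paKernel_mul_rpow_Ioo_left hε hεx hγ]
  refine setIntegral_nonneg measurableSet_Ioo fun y hy => ?_
  have hy0 : 0 < y := hε.trans hy.1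
  exact mul_nonneg (paKernel_nonneg (hy0.trans hy.2).le hy0.le) (rpow_nonneg hy0.le _)

lemma integrableOn_paKernel_mul_rpow (hε : 0 < ε) (hx : 0 < x) (b : ℝ) :
    IntegrableOn (fun y => paKernel γ x y * y ^ (-γ)) (Ioo ε b) := by
  refine (ContinuousOn.integrableOn_Icc ?_).mono_set Ioo_subset_Icc_self
  have hpos : ∀ y ∈ Icc ε b, 0 < y := fun y hy => hε.trans_le hy.1
  unfold paKernel
  exact (((continuousOn_const.inf continuousOn_id).rpow_const fun y hy =>
      Or.inl (lt_min hx (hpos y hy)).ne').mul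
    ((continuousOn_const.sup continuousOn_id).rpow_const fun y hy =>
      Or.inl (hx.trans_le (le_max_left _ _)).ne')).mul
    (continuousOn_id.rpow_const fun y hy => Or.inl (hpos y hy).ne')

lemma paPartialImage_le_setIntegral (hε : 0 < ε) (hεx : ε ≤ x) (hx1 : x ≤ 1) (hγ : 2 * γ ≠ 1) :
    paPartialImage γ ε x ≤ ∫ y in Ioo ε 1, paKernel γ x y * y ^ (-γ) := by
  have hx : 0 < x := hε.trans_le hεx
  rw [← setIntegral_paKernel_mul_rpow_Ioo_left hε hεx hγ]
  refine setIntegral_mono_set (integrableOn_paKernel_mul_rpow hε hx 1) ?_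
    (Ioo_subset_Ioo_right hx1).eventuallyLE
  filter_upwards [ae_restrict_mem measurableSet_Ioo] with y hy
  have hy0 : 0 < y := hε.trans hy.1
  exact mul_nonneg (paKernel_nonneg hx.le hy0.le) (rpow_nonneg hy0.le _)

lemma paPartialImage_sq (hx : 0 < x) :
    paPartialImage γ ε x ^ 2 = ((ε ^ (1 - 2 * γ)) ^ 2 * x ^ (2 * γ - 2)
      - 2 * ε ^ (1 - 2 * γ) * x⁻¹ + x ^ (-(2 * γ))) / (2 * γ - 1) ^ 2 := by
  have h₁ : x ^ (γ - 1) * x ^ (γ - 1) = x ^ (2 * γ - 2) := by rw [← rpow_add hx]; ring_nf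
  have h₂ : x ^ (γ - 1) * x ^ (-γ) = x⁻¹ := by rw [← rpow_add hx, ← rpow_neg_one]; ring_nf
  have h₃ : x ^ (-γ) * x ^ (-γ) = x ^ (-(2 * γ)) := by rw [← rpow_add hx]; ring_nf
  rw [paPartialImage, div_pow]
  congr 1
  linear_combination (ε ^ (1 - 2 * γ)) ^ 2 * h₁ - 2 * ε ^ (1 - 2 * γ) * h₂ + h₃

lemma integrableOn_paPartialImage_sq (hε : 0 < ε) (b : ℝ) :
    IntegrableOn (fun x => paPartialImage γ ε x ^ 2) (Ioo ε b) := by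
  refine (ContinuousOn.integrableOn_Icc ?_).mono_set Ioo_subset_Icc_self
  have hne : ∀ p : ℝ, ∀ x ∈ Icc ε b, x ≠ 0 ∨ 0 ≤ p := fun _ x hx =>
    Or.inl (hε.trans_le hx.1).ne'
  unfold paPartialImage
  exact (((continuousOn_const.mul (continuousOn_id.rpow_const (hne _))).sub
    (continuousOn_id.rpow_const (hne _))).div_const _).pow 2

lemma setIntegral_paPartialImage_sq (hε : 0 < ε) (hε1 : ε ≤ 1) (hγ : 2 * γ ≠ 1) :
    ∫ x in Ioo ε 1, paPartialImage γ ε x ^ 2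
      = ((ε ^ (1 - 2 * γ)) ^ 2 * (1 - ε ^ (2 * γ - 1)) / (2 * γ - 1)
        + 2 * ε ^ (1 - 2 * γ) * log ε + (ε ^ (1 - 2 * γ) - 1) / (2 * γ - 1))
        / (2 * γ - 1) ^ 2 := by
  have hrpow := integrableOn_Ioo_rpow hε 1
  have hinv : IntegrableOn (fun x : ℝ => x⁻¹) (Ioo ε 1) :=
    (hrpow (-1)).congr_fun (fun x _ => rpow_neg_one x) measurableSet_Ioo
  have hsub : IntegrableOn (fun x : ℝ => (ε ^ (1 - 2 * γ)) ^ 2 * x ^ (2 * γ - 2)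
      - 2 * ε ^ (1 - 2 * γ) * x⁻¹) (Ioo ε 1) :=
    ((hrpow _).const_mul _).sub (hinv.const_mul _)
  rw [setIntegral_congr_fun measurableSet_Ioo fun x hx => paPartialImage_sq (hε.trans hx.1),
    integral_div, integral_add hsub (hrpow _),
    integral_sub ((hrpow _).const_mul _) (hinv.const_mul _), integral_const_mul,
    integral_const_mul, integral_Ioo_inv hε hε1,
    integral_Ioo_rpow hε hε1 (by contrapose! hγ; linarith),
    integral_Ioo_rpow hε hε1 (by contrapose! hγ; linarith)]
  rw [show 2 * γ - 2 + 1 = 2 * γ - 1 by ring, show -(2 * γ) + 1 = -(2 * γ - 1) by ring,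
    show 1 - 2 * γ = -(2 * γ - 1) by ring]
  have hc : 2 * γ - 1 ≠ 0 := sub_ne_zero.mpr hγ
  generalize 2 * γ - 1 = c at *
  simp only [one_rpow, log_one]
  field_simp
  ring

lemma mul_le_setIntegral_paPartialImage_sq (hγ : 1 / 2 < γ) (hε : 0 < ε) (hε1 : ε ≤ 1) :
    ε ^ (1 - 2 * γ) / (2 * γ - 1) ^ 2
        * (1 - ε ^ (2 * γ - 1) + 2 * (2 * γ - 1) * ε ^ (2 * γ - 1) * log ε)
        * ((ε ^ (1 - 2 * γ) - 1) / (2 * γ - 1))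
      ≤ ∫ x in Ioo ε 1, paPartialImage γ ε x ^ 2 := by
  rw [setIntegral_paPartialImage_sq hε hε1 (by linarith)]
  have hexp := one_add_mul_log_le_rpow hε (1 - 2 * γ)
  rw [show 1 - 2 * γ = -(2 * γ - 1) by ring, rpow_neg hε.le] at *
  have hc : 0 < 2 * γ - 1 := by linarith
  have hv : 0 < ε ^ (2 * γ - 1) := rpow_pos_of_pos hε _
  generalize 2 * γ - 1 = c at *
  generalize ε ^ c = v at *
  rw [← sub_nonneg]
  have key : ((v⁻¹) ^ 2 * (1 - v) / c + 2 * v⁻¹ * log ε + (v⁻¹ - 1) / c) / c ^ 2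
      - v⁻¹ / c ^ 2 * (1 - v + 2 * c * v * log ε) * ((v⁻¹ - 1) / c)
      = 2 * (v⁻¹ - 1 + c * log ε) / c ^ 3 := by
    field_simp
    ring
  rw [key]
  have : 0 ≤ v⁻¹ - 1 + c * log ε := by linarith
  positivity

/-- For `γ ∈ (1/2, 1)` and `ε ∈ (0,1)`, the preferential-attachment
integral operator `Tg(x) = ∫_ε^1 (x∧y)^{−γ} (x∨y)^{−(1−γ)} g(y) dy` on `L²((ε,1))`
satisfies `‖T‖² ≥ (ε^{1−2γ}/(2γ−1)²)(1 − ε^{2γ−1} + 2(2γ−1) ε^{2γ−1} log ε)`. -/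
theorem opNorm_PA_operator_lower (γ ε : ℝ) (hγ : γ ∈ Set.Ioo (1 / 2 : ℝ) 1)
    (hε : ε ∈ Set.Ioo (0 : ℝ) 1)
    (T : Lp ℝ 2 (volume.restrict (Set.Ioo ε 1)) →L[ℝ] Lp ℝ 2 (volume.restrict (Set.Ioo ε 1)))
    (hT : ∀ g : Lp ℝ 2 (volume.restrict (Set.Ioo ε 1)),
      ∀ᵐ x ∂(volume.restrict (Set.Ioo ε 1)),
        (T g : ℝ → ℝ) x = ∫ y in Set.Ioo ε 1,
          (min x y) ^ (-γ) * (max x y) ^ (-(1 - γ)) * g y) :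
    ε ^ (1 - 2 * γ) / (2 * γ - 1) ^ 2
        * (1 - ε ^ (2 * γ - 1) + 2 * (2 * γ - 1) * ε ^ (2 * γ - 1) * Real.log ε)
      ≤ ‖T‖ ^ 2 := by
  obtain ⟨hγ₁, -⟩ := hγ
  obtain ⟨hε₀, hε₁⟩ := hε
  have hγ₂ : 2 * γ ≠ 1 := by linarith
  have hf := memLp_two_Ioo_rpow hε₀ 1 (-γ)
  set f := hf.toLp _
  have hf_norm : ‖f‖ ^ 2 = (ε ^ (1 - 2 * γ) - 1) / (2 * γ - 1) := by
    rw [hf.norm_toLp_sq, setIntegral_rpow_neg_sq hε₀ hε₁.le hγ₂]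
  have hf_pos : 0 < ‖f‖ ^ 2 := by
    have : 1 < ε ^ (1 - 2 * γ) := one_lt_rpow_of_pos_of_lt_one_of_neg hε₀ hε₁ (by linarith)
    rw [hf_norm]
    exact div_pos (by linarith) (by linarith)
  have hTf : ∀ᵐ x ∂(volume.restrict (Ioo ε 1)), paPartialImage γ ε x ≤ T f x := by
    filter_upwards [hT f, ae_restrict_mem measurableSet_Ioo] with x hx hmem
    rw [hx, integral_congr_ae (hf.coeFn_toLp.mono fun y hy => by rw [hy])]
    exact paPartialImage_le_setIntegral hε₀ hmem.1.le hmem.2.le hγ₂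
  refine T.le_opNorm_sq_of_mul_norm_sq_le hf_pos ?_
  calc _ ≤ ∫ x in Ioo ε 1, paPartialImage γ ε x ^ 2 := by
        rw [hf_norm]; exact mul_le_setIntegral_paPartialImage_sq hγ₁ hε₀ hε₁.le
    _ ≤ ‖T f‖ ^ 2 := integral_sq_le_norm_sq_of_ae_le _
        (integrableOn_paPartialImage_sq hε₀ 1)
        ((ae_restrict_mem measurableSet_Ioo).mono fun x hx =>
          paPartialImage_nonneg hε₀ hx.1.le hγ₂)
        hTf
end
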